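/- arXiv:1608.06442 — 3 statements merged into one kernel-verified Lean document; each statement's English description precedes it below -/
import Mathlib

section
/- Let E, F be Polish spaces, u ↦ ρ^u a measurable kernel from F to probability measures on E, ν a probability measure on F, and define Λ(φ) = ∫_F log ∫_E exp(φ(x,u)) ρ^u(dx) ν(du) for φ ∈ C_b(E×F), and Λ*(λ) = sup_{φ ∈ C_b(E×F)} ( ∫ φ dλ − Λ(φ) ) for probability measures λ on E×F. Then for every probability measure λ on E×F: Λ*(λ) = H(λ | ρ^u × ν) if the second marginal of λ equals ν, and Λ*(λ) = +∞ otherwise. -/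
/-!
Write `μ` for `ρ^u(dx) ν(du)`. For bounded `ψ`, the Donsker–Varadhan functional
`∫ ψ dλ - log ∫ e^ψ dμ` is at most `H(λ | μ)`: this is Gibbs' inequality for `λ` against the
tilted measure `e^ψ μ / ∫ e^ψ dμ`. Conversely it comes arbitrarily close to `H(λ | μ)`: for
`λ ≪ μ` take truncations `ψ_n` of `log (dλ/dμ)`, for which `r ψ_n + 1 - e^{ψ_n}` (with
`r = dλ/dμ`) is nonnegative and tends to `r log r + 1 - r`, so Fatou applies; otherwise take
large multiples of the indicator of a `μ`-null set charged by `λ`.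

If the second marginal of `λ` is `ν`, the upper bound applied to `φ(x,u) - Λ_u(φ)`, with
`Λ_u(φ) = log ∫ e^{φ(x,u)} ρ^u(dx)`, gives `Λ*(λ) ≤ H(λ | μ)`. For the lower bound (which holds
for every `λ`), Jensen gives `Λ(φ) ≤ log ∫ e^φ dμ`, and the Donsker–Varadhan functional is
continuous in `L¹(λ + μ)` on uniformly bounded functions, among which the bounded continuous ones
are dense. If the second marginal is not `ν`, some `g ∈ C_b(F)` integrates differently against it
and `ν`, and `φ(x,u) = t g(u)` makes `∫ φ dλ - Λ(φ) = t (∫ g dλ₂ - ∫ g dν)` unbounded.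
-/

open MeasureTheory ProbabilityTheory

open Classical in
noncomputable def relEnt {E : Type*} [MeasurableSpace E] (ν ν' : Measure E) : EReal :=
  if ν ≪ ν' ∧ Integrable (llr ν ν') ν then ((∫ x, llr ν ν' x ∂ν : ℝ) : EReal) else ⊤

open Real Set Filter TopologicalSpace InformationTheory
open scoped ENNReal Topology BoundedContinuousFunction

lemma exp_sub_exp_le_of_le {a b M : ℝ} (ha : a ≤ M) : exp a - exp b ≤ exp M * |a - b| := by
  have h := add_one_le_exp (b - a)
  rw [exp_sub, le_div_iff₀ (exp_pos a)] at h
  calc exp a - exp b ≤ exp a * (a - b) := by linarith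
    _ ≤ exp a * |a - b| := mul_le_mul_of_nonneg_left (le_abs_self _) (exp_pos a).le
    _ ≤ exp M * |a - b| := mul_le_mul_of_nonneg_right (exp_le_exp.2 ha) (abs_nonneg _)

section BoundedFunctions

variable {α : Type*} [MeasurableSpace α] {P : Measure α} {f : α → ℝ} {M : ℝ}

lemma integrable_of_abs_le [IsFiniteMeasure P] (hf : Measurable f) (hfM : ∀ x, |f x| ≤ M) :
    Integrable f P :=
  .of_bound hf.aestronglyMeasurable M (.of_forall hfM)

lemma integrable_exp_of_abs_le [IsFiniteMeasure P] (hf : Measurable f) (hfM : ∀ x, |f x| ≤ M) :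
    Integrable (fun x ↦ exp (f x)) P :=
  integrable_of_abs_le hf.exp fun x ↦ by
    rw [abs_of_pos (exp_pos _)]
    exact exp_le_exp.2 (abs_le.1 (hfM x)).2

variable [IsProbabilityMeasure P]

lemma integral_exp_mem_Icc (hf : Measurable f) (hfM : ∀ x, |f x| ≤ M) :
    ∫ x, exp (f x) ∂P ∈ Icc (exp (-M)) (exp M) := by
  have hint := integrable_exp_of_abs_le (P := P) hf hfM
  constructor
  · simpa using integral_mono (integrable_const _) hint fun x ↦ exp_le_exp.2 (abs_le.1 (hfM x)).1
  · simpa using integral_mono hint (integrable_const _) fun x ↦ exp_le_exp.2 (abs_le.1 (hfM x)).2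

lemma abs_log_integral_exp_le (hf : Measurable f) (hfM : ∀ x, |f x| ≤ M) :
    |log (∫ x, exp (f x) ∂P)| ≤ M := by
  obtain ⟨hlo, hhi⟩ := integral_exp_mem_Icc (P := P) hf hfM
  rw [abs_le]
  constructor
  · simpa using log_le_log (exp_pos _) hlo
  · simpa using log_le_log ((exp_pos _).trans_le hlo) hhi

lemma log_integral_exp_sub_log_integral_exp_le {φ ψ : α → ℝ} (hφ : Measurable φ)
    (hψ : Measurable ψ) (hφM : ∀ x, |φ x| ≤ M) (hψM : ∀ x, |ψ x| ≤ M) :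
    log (∫ x, exp (φ x) ∂P) - log (∫ x, exp (ψ x) ∂P) ≤ exp (2 * M) * ∫ x, |ψ x - φ x| ∂P := by
  set Zφ := ∫ x, exp (φ x) ∂P
  set Zψ := ∫ x, exp (ψ x) ∂P
  set D := ∫ x, |ψ x - φ x| ∂P
  have hZψ : exp (-M) ≤ Zψ := (integral_exp_mem_Icc hψ hψM).1
  have hZψ_pos : 0 < Zψ := (exp_pos _).trans_le hZψ
  have hZφ_pos : 0 < Zφ := (exp_pos _).trans_le (integral_exp_mem_Icc hφ hφM).1
  have hD : 0 ≤ exp M * D := mul_nonneg (exp_pos M).le (integral_nonneg fun x ↦ abs_nonneg _)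
  have hZ : Zφ - Zψ ≤ exp M * D := by
    have hφ_int := integrable_exp_of_abs_le (P := P) hφ hφM
    have hψ_int := integrable_exp_of_abs_le (P := P) hψ hψM
    rw [← integral_sub hφ_int hψ_int, ← integral_const_mul]
    refine integral_mono (hφ_int.sub hψ_int) (((integrable_of_abs_le hψ hψM).sub
      (integrable_of_abs_le hφ hφM)).abs.const_mul _) fun x ↦ ?_
    rw [abs_sub_comm]
    exact exp_sub_exp_le_of_le (abs_le.1 (hφM x)).2
  calc log Zφ - log Zψ = log (Zφ / Zψ) := (log_div hZφ_pos.ne' hZψ_pos.ne').symm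
    _ ≤ (Zφ - Zψ) / Zψ := by
      rw [sub_div, div_self hZψ_pos.ne']
      exact log_le_sub_one_of_pos (div_pos hZφ_pos hZψ_pos)
    _ ≤ exp M * D / exp (-M) :=
      (div_le_div_of_nonneg_right hZ hZψ_pos.le).trans
        (div_le_div_of_nonneg_left hD (exp_pos _) hZψ)
    _ = exp (2 * M) * D := by
      rw [mul_div_right_comm, ← exp_sub]
      ring_nf

end BoundedFunctions

lemma sub_one_le_mul_log {r s : ℝ} (hs : 0 < s) (hlo : min r 1 ≤ s) (hhi : s ≤ max r 1) :
    s - 1 ≤ r * log s := by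
  have hself : s - 1 ≤ s * log s := by
    have := mul_le_mul_of_nonneg_left (one_sub_inv_le_log_of_pos hs) hs.le
    rwa [mul_sub, mul_one, mul_inv_cancel₀ hs.ne'] at this
  rcases lt_trichotomy s 1 with h | rfl | h
  · have hr : r ≤ s := by simpa [min_le_iff, h.not_ge] using hlo
    nlinarith [log_neg hs h]
  · simp
  · have hr : s ≤ r := by simpa [le_max_iff, h.not_ge] using hhi
    nlinarith [log_pos h]

-- Clamping the density itself, rather than `llr` (where `log 0 = 0`), makes the truncation `-n`
-- where the density vanishes, so that `∫ exp (truncLog n r) dμ` stays close to `1`.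
noncomputable def truncLog (n : ℕ) (r : ℝ) : ℝ :=
  log (max (min r (exp n)) (exp (-n)))

lemma measurable_truncLog (n : ℕ) : Measurable (truncLog n) :=
  ((measurable_id.min measurable_const).max measurable_const).log

lemma exp_truncLog (n : ℕ) (r : ℝ) :
    exp (truncLog n r) = max (min r (exp n)) (exp (-n)) :=
  exp_log ((exp_pos _).trans_le (le_max_right _ _))

lemma abs_truncLog_le (n : ℕ) (r : ℝ) : |truncLog n r| ≤ n := by
  have hlo : exp (-n) ≤ max (min r (exp n)) (exp (-n)) := le_max_right _ _
  have hhi : max (min r (exp n)) (exp (-n)) ≤ exp n :=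
    max_le (min_le_right _ _) (exp_le_exp.2 (by simp))
  rw [truncLog, abs_le]
  constructor
  · simpa using log_le_log (exp_pos _) hlo
  · simpa using log_le_log ((exp_pos _).trans_le hlo) hhi

lemma mul_truncLog_add_one_sub_exp_nonneg (n : ℕ) (r : ℝ) :
    0 ≤ r * truncLog n r + 1 - exp (truncLog n r) := by
  have hlo : min r 1 ≤ max (min r (exp n)) (exp (-n)) :=
    (min_le_min_left r (one_le_exp_iff.2 (by simp))).trans (le_max_left _ _)
  have hhi : max (min r (exp n)) (exp (-n)) ≤ max r 1 :=
    max_le_max (min_le_left _ _) (exp_le_one_iff.2 (by simp))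
  have hpos : 0 < max (min r (exp n)) (exp (-n)) := (exp_pos _).trans_le (le_max_right _ _)
  have key := sub_one_le_mul_log hpos hlo hhi
  rw [truncLog, exp_log hpos]
  linarith

lemma tendsto_mul_truncLog_add_one_sub_exp {r : ℝ} (hr : 0 ≤ r) :
    Tendsto (fun n : ℕ ↦ r * truncLog n r + 1 - exp (truncLog n r)) atTop (𝓝 (klFun r)) := by
  rcases hr.eq_or_lt with rfl | hr
  · have h : Tendsto (fun n : ℕ ↦ exp (-(n : ℝ))) atTop (𝓝 0) :=
      tendsto_exp_neg_atTop_nhds_zero.comp tendsto_natCast_atTop_atTop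
    simpa [exp_truncLog, klFun_zero, min_eq_left (exp_pos _).le,
      max_eq_right (exp_pos _).le] using (tendsto_const_nhds (x := (1 : ℝ))).sub h
  · refine tendsto_const_nhds.congr' ?_
    filter_upwards [tendsto_natCast_atTop_atTop.eventually_ge_atTop |log r|] with n hn
    have hhi : r ≤ exp n := by
      simpa [exp_log hr] using exp_le_exp.2 ((le_abs_self (log r)).trans hn)
    have hlo : exp (-n) ≤ r := by
      simpa [exp_log hr] using exp_le_exp.2 (neg_le.1 ((neg_le_abs (log r)).trans hn))
    rw [exp_truncLog, truncLog, min_eq_left hhi, max_eq_left hlo, klFun_apply]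

noncomputable def donskerVaradhan {α : Type*} [MeasurableSpace α] (lam μ : Measure α)
    (f : α → ℝ) : ℝ :=
  ∫ x, f x ∂lam - log (∫ x, exp (f x) ∂μ)

section DonskerVaradhan

variable {α : Type*} [MeasurableSpace α] {lam μ : Measure α}
  [IsProbabilityMeasure lam] [IsProbabilityMeasure μ]

lemma relEnt_eq_klDiv : relEnt lam μ = klDiv lam μ := by
  by_cases h : lam ≪ μ ∧ Integrable (llr lam μ) lam
  · have gibbs := integral_llr_add_sub_measure_univ_nonneg h.1 h.2
    simp only [probReal_univ, add_sub_cancel_right] at gibbs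
    rw [relEnt, if_pos h, klDiv_of_ac_of_integrable h.1 h.2, probReal_univ, probReal_univ,
      add_sub_cancel_right, EReal.coe_ennreal_ofReal, max_eq_left gibbs]
  · rw [relEnt, if_neg h, klDiv_eq_top_iff.2 fun hac hint ↦ h ⟨hac, hint⟩]
    rfl

lemma donskerVaradhan_le_integral_llr (hac : lam ≪ μ) (hllr : Integrable (llr lam μ) lam)
    {f : α → ℝ} (hf : Integrable f lam) (hexp : Integrable (fun x ↦ exp (f x)) μ) :
    donskerVaradhan lam μ f ≤ ∫ x, llr lam μ x ∂lam := by
  have := isProbabilityMeasure_tilted hexp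
  have gibbs := integral_llr_add_sub_measure_univ_nonneg
    (hac.trans (absolutelyContinuous_tilted hexp)) (integrable_llr_tilted_right hac hf hllr hexp)
  rw [integral_llr_tilted_right hac hf hexp hllr] at gibbs
  simp only [probReal_univ, add_sub_cancel_right] at gibbs
  rw [donskerVaradhan]
  linarith

lemma donskerVaradhan_le_klDiv {f : α → ℝ} (hf : Integrable f lam)
    (hexp : Integrable (fun x ↦ exp (f x)) μ) :
    (donskerVaradhan lam μ f : EReal) ≤ klDiv lam μ := by
  rw [← relEnt_eq_klDiv, relEnt]
  split_ifs with h
  · exact EReal.coe_le_coe_iff.2 (donskerVaradhan_le_integral_llr h.1 h.2 hf hexp)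
  · exact le_top

lemma integrable_rnDeriv_mul_add_one_sub_exp (hac : lam ≪ μ) {ψ : α → ℝ} {M : ℝ}
    (hψ : Measurable ψ) (hψM : ∀ x, |ψ x| ≤ M) :
    Integrable (fun x ↦ (lam.rnDeriv μ x).toReal * ψ x + 1 - exp (ψ x)) μ :=
  (((integrable_rnDeriv_smul_iff hac).2 (integrable_of_abs_le hψ hψM)).add
    (integrable_const 1)).sub (integrable_exp_of_abs_le hψ hψM)

lemma integral_rnDeriv_mul_add_one_sub_exp_le (hac : lam ≪ μ) {ψ : α → ℝ} {M : ℝ}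
    (hψ : Measurable ψ) (hψM : ∀ x, |ψ x| ≤ M) :
    ∫ x, ((lam.rnDeriv μ x).toReal * ψ x + 1 - exp (ψ x)) ∂μ ≤ donskerVaradhan lam μ ψ := by
  have hrψ_int : Integrable (fun x ↦ (lam.rnDeriv μ x).toReal * ψ x) μ :=
    (integrable_rnDeriv_smul_iff hac).2 (integrable_of_abs_le hψ hψM)
  have hrψ1_int : Integrable (fun x ↦ (lam.rnDeriv μ x).toReal * ψ x + 1) μ :=
    hrψ_int.add (integrable_const 1)
  have hexp_int : Integrable (fun x ↦ exp (ψ x)) μ := integrable_exp_of_abs_le hψ hψM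
  have hrψ : ∫ x, (lam.rnDeriv μ x).toReal * ψ x ∂μ = ∫ x, ψ x ∂lam := integral_rnDeriv_smul hac
  have hlog := log_le_sub_one_of_pos (integral_exp_pos hexp_int)
  rw [integral_sub hrψ1_int hexp_int,
    integral_add hrψ_int (integrable_const 1), hrψ, integral_const, probReal_univ, one_smul,
    donskerVaradhan]
  linarith

lemma exists_lt_ofReal_donskerVaradhan_truncLog (hac : lam ≪ μ) {c : ℝ≥0∞}
    (hc : c < klDiv lam μ) :
    ∃ n : ℕ, c < .ofReal (donskerVaradhan lam μ fun x ↦ truncLog n (lam.rnDeriv μ x).toReal) := by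
  set r : α → ℝ := fun x ↦ (lam.rnDeriv μ x).toReal
  set ψ : ℕ → α → ℝ := fun n x ↦ truncLog n (r x)
  set k : ℕ → α → ℝ := fun n x ↦ r x * ψ n x + 1 - exp (ψ n x)
  have hr : Measurable r := (Measure.measurable_rnDeriv lam μ).ennreal_toReal
  have hψ : ∀ n, Measurable (ψ n) := fun n ↦ (measurable_truncLog n).comp hr
  have hψM : ∀ n x, |ψ n x| ≤ n := fun n x ↦ abs_truncLog_le n (r x)
  have hfatou : klDiv lam μ ≤ liminf (fun n ↦ ENNReal.ofReal (∫ x, k n x ∂μ)) atTop :=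
    calc klDiv lam μ = ∫⁻ x, .ofReal (klFun (r x)) ∂μ := klDiv_eq_lintegral_klFun_of_ac hac
    _ = ∫⁻ x, liminf (fun n ↦ ENNReal.ofReal (k n x)) atTop ∂μ := lintegral_congr fun x ↦
        ((ENNReal.continuous_ofReal.tendsto _).comp
          (tendsto_mul_truncLog_add_one_sub_exp ENNReal.toReal_nonneg)).liminf_eq.symm
    _ ≤ liminf (fun n ↦ ∫⁻ x, ENNReal.ofReal (k n x) ∂μ) atTop :=
        lintegral_liminf_le fun n ↦ (((hr.mul (hψ n)).add_const 1).sub (hψ n).exp).ennreal_ofReal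
    _ = liminf (fun n ↦ ENNReal.ofReal (∫ x, k n x ∂μ)) atTop := by
        congr with n
        exact (ofReal_integral_eq_lintegral_ofReal
          (integrable_rnDeriv_mul_add_one_sub_exp hac (hψ n) (hψM n))
          (.of_forall fun x ↦ mul_truncLog_add_one_sub_exp_nonneg n (r x))).symm
  obtain ⟨n, hn⟩ := (eventually_lt_of_lt_liminf (hc.trans_le hfatou)).exists
  exact ⟨n, hn.trans_le (ENNReal.ofReal_le_ofReal
    (integral_rnDeriv_mul_add_one_sub_exp_le hac (hψ n) (hψM n)))⟩

lemma exists_lt_donskerVaradhan_of_not_absolutelyContinuous (h : ¬ lam ≪ μ) (c : ℝ) :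
    ∃ ψ : α → ℝ, ∃ M, Measurable ψ ∧ (∀ x, |ψ x| ≤ M) ∧ c < donskerVaradhan lam μ ψ := by
  obtain ⟨t, ht, hμt, hlamt⟩ : ∃ t, MeasurableSet t ∧ μ t = 0 ∧ lam t ≠ 0 := by
    by_contra! H
    exact h (.mk fun s hs h0 ↦ H s hs h0)
  have hpos : 0 < lam.real t := ENNReal.toReal_pos hlamt (measure_ne_top _ _)
  set a := (|c| + 1) / lam.real t
  have ha : 0 ≤ a := by positivity
  refine ⟨t.indicator fun _ ↦ a, a, measurable_const.indicator ht, fun x ↦ ?_, ?_⟩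
  · by_cases hx : x ∈ t <;> simp [hx, abs_of_nonneg ha, ha]
  · have hexp : (fun x ↦ exp (t.indicator (fun _ ↦ a) x)) =ᵐ[μ] fun _ ↦ 1 := by
      filter_upwards [measure_eq_zero_iff_ae_notMem.1 hμt] with x hx
      simp [hx]
    rw [donskerVaradhan, integral_congr_ae hexp, integral_indicator_const a ht]
    simp only [integral_const, probReal_univ, smul_eq_mul, mul_one, log_one, sub_zero, a]
    rw [mul_div_cancel₀ _ hpos.ne']
    linarith [le_abs_self c]

lemma exists_lt_donskerVaradhan {c : ℝ} (hc : (c : EReal) < klDiv lam μ) :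
    ∃ ψ : α → ℝ, ∃ M, Measurable ψ ∧ (∀ x, |ψ x| ≤ M) ∧ c < donskerVaradhan lam μ ψ := by
  by_cases hac : lam ≪ μ
  swap
  · exact exists_lt_donskerVaradhan_of_not_absolutelyContinuous hac c
  rcases lt_or_ge c 0 with hneg | hnn
  · exact ⟨0, 0, measurable_const, by simp, by simpa [donskerVaradhan] using hneg⟩
  · have : ENNReal.ofReal c < klDiv lam μ := by
      rwa [← EReal.coe_ennreal_lt_coe_ennreal_iff, EReal.coe_ennreal_ofReal, max_eq_left hnn]
    obtain ⟨n, hn⟩ := exists_lt_ofReal_donskerVaradhan_truncLog hac this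
    exact ⟨_, n, (measurable_truncLog n).comp (Measure.measurable_rnDeriv lam μ).ennreal_toReal,
      fun x ↦ abs_truncLog_le n _, (ENNReal.ofReal_lt_ofReal_iff'.1 hn).1⟩

lemma donskerVaradhan_le_add {φ ψ : α → ℝ} {M : ℝ} (hφ : Measurable φ) (hψ : Measurable ψ)
    (hφM : ∀ x, |φ x| ≤ M) (hψM : ∀ x, |ψ x| ≤ M) :
    donskerVaradhan lam μ ψ ≤ donskerVaradhan lam μ φ + ∫ x, |ψ x - φ x| ∂lam
      + exp (2 * M) * ∫ x, |ψ x - φ x| ∂μ := by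
  have hlam : ∫ x, ψ x ∂lam - ∫ x, φ x ∂lam ≤ ∫ x, |ψ x - φ x| ∂lam := by
    have hdiff_int := (integrable_of_abs_le (P := lam) hψ hψM).sub (integrable_of_abs_le hφ hφM)
    rw [← integral_sub (integrable_of_abs_le hψ hψM) (integrable_of_abs_le hφ hφM)]
    exact integral_mono hdiff_int hdiff_int.abs fun x ↦ le_abs_self _
  have hμ := log_integral_exp_sub_log_integral_exp_le (P := μ) hφ hψ hφM hψM
  rw [donskerVaradhan, donskerVaradhan]
  linarith

end DonskerVaradhan

lemma abs_clamp_sub_clamp_le (a b M : ℝ) :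
    |max (min a M) (-M) - max (min b M) (-M)| ≤ |a - b| :=
  (abs_max_sub_max_le_abs _ _ _).trans <|
    (abs_min_sub_min_le_max _ _ _ _).trans_eq (by simp)

lemma exists_boundedContinuous_abs_le_integral_abs_sub_le {X : Type*} [TopologicalSpace X]
    [PseudoMetrizableSpace X] [MeasurableSpace X] [BorelSpace X]
    (κ : Measure X) [IsFiniteMeasure κ] {ψ : X → ℝ} {M : ℝ} (hψ : Measurable ψ)
    (hψM : ∀ x, |ψ x| ≤ M) {δ : ℝ} (hδ : 0 < δ) :
    ∃ φ : X →ᵇ ℝ, (∀ x, |φ x| ≤ M) ∧ ∫ x, |ψ x - φ x| ∂κ ≤ δ := by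
  have hψ_int : Integrable ψ κ := integrable_of_abs_le hψ hψM
  obtain ⟨φ₀, hφ₀, hφ₀_int⟩ := hψ_int.exists_boundedContinuous_integral_sub_le hδ
  have hclamp : ∀ x, |max (min (φ₀ x) M) (-M)| ≤ M := fun x ↦
    abs_le.2 ⟨le_max_right _ _,
      max_le (min_le_right _ _) (by linarith [(abs_nonneg _).trans (hψM x)])⟩
  let φ : X →ᵇ ℝ := .ofNormedAddCommGroup (fun x ↦ max (min (φ₀ x) M) (-M))
    ((φ₀.continuous.min continuous_const).max continuous_const) M hclamp
  refine ⟨φ, hclamp, (integral_mono ?_ (hψ_int.sub hφ₀_int).norm fun x ↦ ?_).trans hφ₀⟩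
  · exact (hψ_int.sub (integrable_of_abs_le φ.continuous.measurable hclamp)).abs
  · have hψx : max (min (ψ x) M) (-M) = ψ x :=
      by rw [min_eq_left (abs_le.1 (hψM x)).2, max_eq_left (abs_le.1 (hψM x)).1]
    calc |ψ x - φ x| = |max (min (ψ x) M) (-M) - φ x| := by rw [hψx]
      _ ≤ ‖ψ x - φ₀ x‖ := abs_clamp_sub_clamp_le _ _ _

noncomputable def legendreObjective {E F : Type*} [MeasurableSpace E] [MeasurableSpace F]
    (ν : Measure F) (ρ : Kernel F E) (lam : Measure (E × F)) (φ : E × F → ℝ) : ℝ :=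
  ∫ p, φ p ∂lam - ∫ u, log (∫ x, exp (φ (x, u)) ∂(ρ u)) ∂ν

section Kernel

variable {E F : Type*} [MeasurableSpace E] [MeasurableSpace F] {ν : Measure F} {ρ : Kernel F E}

lemma integral_map_swap_compProd [SFinite ν] [IsSFiniteKernel ρ] {f : E × F → ℝ}
    (hf : Integrable f ((ν ⊗ₘ ρ).map Prod.swap)) :
    ∫ p, f p ∂(ν ⊗ₘ ρ).map Prod.swap = ∫ u, ∫ x, f (x, u) ∂(ρ u) ∂ν := by
  rw [integral_map measurable_swap.aemeasurable hf.aestronglyMeasurable,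
    Measure.integral_compProd]
  · rfl
  · exact (integrable_map_measure hf.aestronglyMeasurable measurable_swap.aemeasurable).1 hf

lemma measurable_integral_exp [IsSFiniteKernel ρ] {φ : E × F → ℝ} (hφ : Measurable φ) :
    Measurable fun u ↦ ∫ x, exp (φ (x, u)) ∂(ρ u) :=
  (hφ.exp.comp measurable_swap).stronglyMeasurable.integral_kernel_prod_right'.measurable

lemma legendreObjective_comp_snd [IsMarkovKernel ρ] (lam : Measure (E × F)) {g : F → ℝ}
    (hg : AEStronglyMeasurable g (lam.map Prod.snd)) :
    legendreObjective ν ρ lam (fun p ↦ g p.2) = ∫ u, g u ∂(lam.map Prod.snd) - ∫ u, g u ∂ν := by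
  simp [legendreObjective, integral_map measurable_snd.aemeasurable hg]

variable [IsProbabilityMeasure ν] [IsMarkovKernel ρ]

instance isProbabilityMeasure_map_swap_compProd :
    IsProbabilityMeasure ((ν ⊗ₘ ρ).map Prod.swap) :=
  Measure.isProbabilityMeasure_map measurable_swap.aemeasurable

lemma donskerVaradhan_le_legendreObjective (lam : Measure (E × F)) {φ : E × F → ℝ} {M : ℝ}
    (hφ : Measurable φ) (hφM : ∀ p, |φ p| ≤ M) :
    donskerVaradhan lam ((ν ⊗ₘ ρ).map Prod.swap) φ ≤ legendreObjective ν ρ lam φ := by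
  set Z := fun u ↦ ∫ x, exp (φ (x, u)) ∂(ρ u)
  have hZm : Measurable Z := measurable_integral_exp hφ
  have hφu : ∀ u, Measurable fun x ↦ φ (x, u) := fun u ↦ hφ.comp measurable_prodMk_right
  have hZ : ∀ u, Z u ∈ Icc (exp (-M)) (exp M) := fun u ↦
    integral_exp_mem_Icc (hφu u) fun x ↦ hφM _
  have hjensen : ∫ u, log (Z u) ∂ν ≤ log (∫ u, Z u ∂ν) :=
    (strictConcaveOn_log_Ioi.concaveOn.subset (Ici_subset_Ioi.2 (exp_pos (-M)))
      (convex_Ici _)).le_map_integral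
      (continuousOn_log.mono fun x hx ↦ ((exp_pos _).trans_le hx).ne') isClosed_Ici
      (.of_forall fun u ↦ (hZ u).1)
      (integrable_of_abs_le hZm fun u ↦ by
        rw [abs_of_pos ((exp_pos _).trans_le (hZ u).1)]; exact (hZ u).2)
      (integrable_of_abs_le hZm.log fun u ↦ abs_log_integral_exp_le (hφu u) fun x ↦ hφM _)
  rw [donskerVaradhan, legendreObjective, integral_map_swap_compProd
    (integrable_exp_of_abs_le hφ hφM)]
  linarith

variable (lam : Measure (E × F)) [IsProbabilityMeasure lam]

lemma legendreObjective_le_klDiv (hm : lam.map Prod.snd = ν) {φ : E × F → ℝ} {M : ℝ}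
    (hφ : Measurable φ) (hφM : ∀ p, |φ p| ≤ M) :
    (legendreObjective ν ρ lam φ : EReal) ≤ klDiv lam ((ν ⊗ₘ ρ).map Prod.swap) := by
  set Z := fun u ↦ ∫ x, exp (φ (x, u)) ∂(ρ u)
  have hZm : Measurable Z := measurable_integral_exp hφ
  have hφu : ∀ u, Measurable fun x ↦ φ (x, u) := fun u ↦ hφ.comp measurable_prodMk_right
  have hZ_pos : ∀ u, 0 < Z u := fun u ↦
    (exp_pos _).trans_le (integral_exp_mem_Icc (hφu u) fun x ↦ hφM _).1
  have hlogZ : ∀ u, |log (Z u)| ≤ M := fun u ↦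
    abs_log_integral_exp_le (hφu u) fun x ↦ hφM _
  set ψ := fun p : E × F ↦ φ p - log (Z p.2)
  have hψ : Measurable ψ := hφ.sub (hZm.comp measurable_snd).log
  have hψM : ∀ p, |ψ p| ≤ M + M := fun p ↦ (abs_sub _ _).trans (add_le_add (hφM p) (hlogZ p.2))
  have hexp : ∫ p, exp (ψ p) ∂(ν ⊗ₘ ρ).map Prod.swap = 1 := by
    rw [integral_map_swap_compProd (integrable_exp_of_abs_le hψ hψM)]
    simp [ψ, exp_sub, exp_log (hZ_pos _), integral_div, div_self (hZ_pos _).ne', Z]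
  have hψ_int : ∫ p, ψ p ∂lam = legendreObjective ν ρ lam φ := by
    change ∫ p, (φ p - log (Z p.2)) ∂lam = _
    rw [integral_sub (integrable_of_abs_le hφ hφM)
      (integrable_of_abs_le (f := fun p ↦ log (Z p.2)) (hZm.comp measurable_snd).log
        fun p ↦ hlogZ p.2), legendreObjective, ← hm,
      integral_map measurable_snd.aemeasurable hZm.log.aestronglyMeasurable]
  have := donskerVaradhan_le_klDiv (integrable_of_abs_le (P := lam) hψ hψM)
    (integrable_exp_of_abs_le (P := (ν ⊗ₘ ρ).map Prod.swap) hψ hψM)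
  rwa [donskerVaradhan, hexp, log_one, sub_zero, hψ_int] at this

end Kernel

lemma iSup_legendreObjective_eq_top {E F : Type*} [TopologicalSpace E] [MeasurableSpace E]
    [TopologicalSpace F] [PseudoMetrizableSpace F] [MeasurableSpace F] [BorelSpace F]
    {ν : Measure F} [IsProbabilityMeasure ν] {ρ : Kernel F E} [IsMarkovKernel ρ]
    (lam : Measure (E × F)) [IsProbabilityMeasure lam] (hne : lam.map Prod.snd ≠ ν) :
    ⨆ φ : E × F →ᵇ ℝ, (legendreObjective ν ρ lam φ : EReal) = ⊤ := by
  obtain ⟨g, hg⟩ : ∃ g : F →ᵇ ℝ, ∫ u, g u ∂(lam.map Prod.snd) ≠ ∫ u, g u ∂ν := by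
    by_contra! H
    exact hne (ext_of_forall_integral_eq_of_IsFiniteMeasure H)
  refine eq_top_iff.2 (EReal.ge_of_forall_gt_iff_ge.1 fun C _ ↦ ?_)
  set d := ∫ u, g u ∂(lam.map Prod.snd) - ∫ u, g u ∂ν
  let φ : E × F →ᵇ ℝ := (C / d) • g.compContinuous ⟨Prod.snd, continuous_snd⟩
  have hφ : legendreObjective ν ρ lam φ = C := by
    change legendreObjective ν ρ lam (fun p ↦ C / d * g p.2) = C
    rw [legendreObjective_comp_snd lam (g := fun u ↦ C / d * g u)
        (continuous_const.mul g.continuous).aestronglyMeasurable,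
      integral_const_mul, integral_const_mul, ← mul_sub, div_mul_cancel₀ _ (sub_ne_zero.2 hg)]
  exact le_iSup_of_le φ (le_of_eq (congrArg _ hφ.symm))

section Topological

variable {E F : Type*} [TopologicalSpace E] [MeasurableSpace E] [BorelSpace E]
  [TopologicalSpace F] [MeasurableSpace F] [BorelSpace F] [SecondCountableTopology F]
  {ν : Measure F} [IsProbabilityMeasure ν] {ρ : Kernel F E} [IsMarkovKernel ρ]
  (lam : Measure (E × F)) [IsProbabilityMeasure lam]

lemma iSup_legendreObjective_le_klDiv (hm : lam.map Prod.snd = ν) :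
    ⨆ φ : E × F →ᵇ ℝ, (legendreObjective ν ρ lam φ : EReal)
      ≤ klDiv lam ((ν ⊗ₘ ρ).map Prod.swap) :=
  iSup_le fun φ ↦ legendreObjective_le_klDiv lam hm φ.continuous.measurable
    fun p ↦ (Real.norm_eq_abs _).symm.trans_le (φ.norm_coe_le_norm p)

variable [PseudoMetrizableSpace E] [PseudoMetrizableSpace F]

lemma klDiv_le_iSup_legendreObjective :
    (klDiv lam ((ν ⊗ₘ ρ).map Prod.swap) : EReal)
      ≤ ⨆ φ : E × F →ᵇ ℝ, (legendreObjective ν ρ lam φ : EReal) := by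
  set μ := (ν ⊗ₘ ρ).map Prod.swap
  refine EReal.ge_of_forall_gt_iff_ge.1 fun c hc ↦ ?_
  obtain ⟨ψ, M, hψ, hψM, hcψ⟩ := exists_lt_donskerVaradhan hc
  set δ := (donskerVaradhan lam μ ψ - c) / (1 + exp (2 * M))
  have hδ : 0 < δ := div_pos (sub_pos.2 hcψ) (by positivity)
  obtain ⟨φ, hφM, hφδ⟩ :=
    exists_boundedContinuous_abs_le_integral_abs_sub_le (lam + μ) hψ hψM hδ
  have hdiff_int : ∀ P : Measure (E × F), [IsFiniteMeasure P] →
      Integrable (fun p ↦ |ψ p - φ p|) P := fun P _ ↦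
    ((integrable_of_abs_le hψ hψM).sub (integrable_of_abs_le φ.continuous.measurable hφM)).abs
  rw [integral_add_measure (hdiff_int lam) (hdiff_int μ)] at hφδ
  have hlam : 0 ≤ ∫ p, |ψ p - φ p| ∂lam := integral_nonneg fun p ↦ abs_nonneg _
  have hμ : 0 ≤ ∫ p, |ψ p - φ p| ∂μ := integral_nonneg fun p ↦ abs_nonneg _
  have hclose := donskerVaradhan_le_add (lam := lam) (μ := μ)
    φ.continuous.measurable hψ hφM hψM
  have hjensen := donskerVaradhan_le_legendreObjective (ν := ν) (ρ := ρ) lam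
    φ.continuous.measurable hφM
  have : c ≤ legendreObjective ν ρ lam φ := by
    have hδ_eq : δ * (1 + exp (2 * M)) = donskerVaradhan lam μ ψ - c :=
      div_mul_cancel₀ _ (by positivity)
    nlinarith [exp_pos (2 * M)]
  exact le_iSup_of_le φ (EReal.coe_le_coe_iff.2 this)

end Topological

/-- Identification of the Legendre transform `Λ*` of
`Λ(φ) = ∫ log ∫ e^{φ(x,u)} ρ^u(dx) ν(du)` with the relative entropy
`H(λ | ρ^u × ν)` when the second marginal of `λ` is `ν`, and `+∞` otherwise. -/
theorem stmt5 {E F : Type*}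
    [TopologicalSpace E] [PolishSpace E] [MeasurableSpace E] [BorelSpace E]
    [TopologicalSpace F] [PolishSpace F] [MeasurableSpace F] [BorelSpace F]
    (ν : Measure F) [IsProbabilityMeasure ν]
    (ρ : Kernel F E) [IsMarkovKernel ρ]
    (lam : Measure (E × F)) [IsProbabilityMeasure lam] :
    (lam.map Prod.snd = ν →
      (⨆ φ : BoundedContinuousFunction (E × F) ℝ,
        (((∫ p, φ p ∂lam
          - ∫ u, Real.log (∫ x, Real.exp (φ (x, u)) ∂(ρ u)) ∂ν) : ℝ) : EReal))
        = relEnt lam ((ν.compProd ρ).map Prod.swap))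
    ∧ (lam.map Prod.snd ≠ ν →
      (⨆ φ : BoundedContinuousFunction (E × F) ℝ,
        (((∫ p, φ p ∂lam
          - ∫ u, Real.log (∫ x, Real.exp (φ (x, u)) ∂(ρ u)) ∂ν) : ℝ) : EReal)) = ⊤) := by
  refine ⟨fun hm ↦ ?_, iSup_legendreObjective_eq_top lam⟩
  rw [relEnt_eq_klDiv]
  exact le_antisymm (iSup_legendreObjective_le_klDiv lam hm)
    (klDiv_le_iSup_legendreObjective lam)
end

section
/- Coupling estimate for the interacting particle system: let x and x̃ solve, driven by the same Brownian motions, the N-particle SDEs dx_{i,t} = g(x_{i,t}, ω_i) dt − (1/N) Σ_j ∂_x f(x_{i,t} − x_{j,t}, ω_i, ω_j) dt + dB_{i,t} and the analogous system with disorder χ_M(ω_i) and initial conditions ξ_{i,M}. Then there is a constant C (depending only on the Lipschitz constants C_f, C_g) such that almost surely, for all t ≥ 0, (1/N) Σ_{i=1}^N sup_{s ≤ t} |x_{i,s} − x̃_{i,s}| ≤ e^{Ct} ( (Ct/N) Σ_i |ω_i − χ_M(ω_i)| (1 + |ω_i|^{k₂} + |χ_M(ω_i)|^{k₂}) + (1/N)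 Σ_i |ξ_i − ξ_{i,M}| ). -/
open MeasureTheory

/-- Truncation at level `M`: `χ_M(ω) = (ω ∧ M) ∨ (−M)`. -/
noncomputable def chiM (M w : ℝ) : ℝ := max (min w M) (-M)

open Set Real

/-!
Since both systems are driven by the same Brownian paths, the noise cancels in the gap
`u_i = x_i - x̃_i`, which solves `u_i(s) = (ξ_i - ξ_{i,M}) + ∫₀ˢ Δ_i` with `Δ_i` the difference
of the two mean-field drifts. The Lipschitz bounds on `g` and `f'` give
`Σ_i |Δ_i| ≤ (C_g + 2C_f) (Σ_i |u_i| + A)`, where `A` is the total disorder gap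
`Σ_i |ω_i - χ_M(ω_i)| (1 + |ω_i|^{k₂} + |χ_M(ω_i)|^{k₂})`. The quantity
`E(s) = Σ_i |ξ_i - ξ_{i,M}| + ∫₀ˢ Σ_i |Δ_i|` dominates both `Σ_i |u_i(s)|` and
`Σ_i sup_{r ≤ s} |u_i(r)|` and satisfies `E' ≤ C (E + A)`, so Grönwall's lemma together with
`e^{Ct} - 1 ≤ Ct e^{Ct}` gives `E(t) ≤ e^{Ct} (E(0) + C t A)`.
-/

noncomputable def meanFieldDrift {ι : Type*} [Fintype ι] (g : ℝ → ℝ → ℝ)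
    (f' : ℝ → ℝ → ℝ → ℝ) (w y : ι → ℝ) (i : ι) : ℝ :=
  g (y i) (w i) - (Fintype.card ι : ℝ)⁻¹ * ∑ j, f' (y i - y j) (w i) (w j)

noncomputable def disorderGap (k u v : ℝ) : ℝ := |u - v| * (1 + |u| ^ k + |v| ^ k)

theorem disorderGap_nonneg (k u v : ℝ) : 0 ≤ disorderGap k u v := by
  unfold disorderGap; positivity

theorem abs_sub_le_disorderGap (k u v : ℝ) : |u - v| ≤ disorderGap k u v :=
  le_mul_of_one_le_right (abs_nonneg _) <| by
    linarith [rpow_nonneg (abs_nonneg u) k, rpow_nonneg (abs_nonneg v) k]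

section MeanField

variable {ι : Type*} [Fintype ι] {g : ℝ → ℝ → ℝ} {f' : ℝ → ℝ → ℝ → ℝ} {Cf Cg k : ℝ}

theorem continuous_meanFieldDrift (hg : ∀ u, Continuous (g · u))
    (hf : ∀ u v, Continuous (f' · u v)) (w : ι → ℝ) {y : ι → ℝ → ℝ}
    (hy : ∀ i, Continuous (y i)) (i : ι) :
    Continuous fun s => meanFieldDrift g f' w (fun j => y j s) i := by
  unfold meanFieldDrift
  fun_prop

theorem abs_meanFieldDrift_sub_le (hCf : 0 ≤ Cf)
    (hf : ∀ a b u v u' v', |f' a u v - f' b u' v'| ≤ Cf * (|a - b| + |u - u'| + |v - v'|))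
    (hgw : ∀ x u v, |g x u - g x v| ≤ Cg * disorderGap k u v)
    (hgx : ∀ x y u, |g x u - g y u| ≤ Cg * |x - y|) (w w' y y' : ι → ℝ) (i : ι) :
    |meanFieldDrift g f' w y i - meanFieldDrift g f' w' y' i|
      ≤ Cg * (|y i - y' i| + disorderGap k (w i) (w' i))
        + (Fintype.card ι : ℝ)⁻¹ * ∑ j, Cf * ((|y i - y' i| + disorderGap k (w i) (w' i))
          + (|y j - y' j| + disorderGap k (w j) (w' j))) := by
  have hg : |g (y i) (w i) - g (y' i) (w' i)|
      ≤ Cg * (|y i - y' i| + disorderGap k (w i) (w' i)) :=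
    calc |g (y i) (w i) - g (y' i) (w' i)|
        ≤ |g (y i) (w i) - g (y i) (w' i)| + |g (y i) (w' i) - g (y' i) (w' i)| :=
          abs_sub_le _ _ _
      _ ≤ Cg * disorderGap k (w i) (w' i) + Cg * |y i - y' i| := add_le_add (hgw _ _ _) (hgx _ _ _)
      _ = Cg * (|y i - y' i| + disorderGap k (w i) (w' i)) := by ring
  have hfj : ∀ j, |f' (y i - y j) (w i) (w j) - f' (y' i - y' j) (w' i) (w' j)|
      ≤ Cf * ((|y i - y' i| + disorderGap k (w i) (w' i))
        + (|y j - y' j| + disorderGap k (w j) (w' j))) := by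
    intro j
    refine (hf _ _ _ _ _ _).trans (mul_le_mul_of_nonneg_left ?_ hCf)
    have hy : |y i - y j - (y' i - y' j)| ≤ |y i - y' i| + |y j - y' j| := by
      rw [sub_sub_sub_comm]; exact abs_sub _ _
    linarith [abs_sub_le_disorderGap k (w i) (w' i), abs_sub_le_disorderGap k (w j) (w' j)]
  have hsplit : meanFieldDrift g f' w y i - meanFieldDrift g f' w' y' i
      = (g (y i) (w i) - g (y' i) (w' i)) - (Fintype.card ι : ℝ)⁻¹
        * ∑ j, (f' (y i - y j) (w i) (w j) - f' (y' i - y' j) (w' i) (w' j)) := by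
    rw [meanFieldDrift, meanFieldDrift, Finset.sum_sub_distrib]; ring
  rw [hsplit]
  refine (abs_sub _ _).trans (add_le_add hg ?_)
  rw [abs_mul, abs_of_nonneg (by positivity)]
  gcongr
  exact (Finset.abs_sum_le_sum_abs _ _).trans (Finset.sum_le_sum fun j _ => hfj j)

theorem sum_abs_meanFieldDrift_sub_le (hCf : 0 ≤ Cf)
    (hf : ∀ a b u v u' v', |f' a u v - f' b u' v'| ≤ Cf * (|a - b| + |u - u'| + |v - v'|))
    (hgw : ∀ x u v, |g x u - g x v| ≤ Cg * disorderGap k u v)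
    (hgx : ∀ x y u, |g x u - g y u| ≤ Cg * |x - y|) (w w' y y' : ι → ℝ) :
    ∑ i, |meanFieldDrift g f' w y i - meanFieldDrift g f' w' y' i|
      ≤ (Cg + 2 * Cf) * (∑ i, |y i - y' i| + ∑ i, disorderGap k (w i) (w' i)) := by
  set e : ι → ℝ := fun i => |y i - y' i| + disorderGap k (w i) (w' i)
  have he : 0 ≤ ∑ i, e i :=
    Finset.sum_nonneg fun i _ => add_nonneg (abs_nonneg _) (disorderGap_nonneg _ _ _)
  calc ∑ i, |meanFieldDrift g f' w y i - meanFieldDrift g f' w' y' i|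
      ≤ ∑ i, (Cg * e i + (Fintype.card ι : ℝ)⁻¹ * ∑ j, Cf * (e i + e j)) :=
        Finset.sum_le_sum fun i _ => abs_meanFieldDrift_sub_le hCf hf hgw hgx w w' y y' i
    _ = Cg * ∑ i, e i + ((Fintype.card ι : ℝ)⁻¹ * Fintype.card ι) * (2 * Cf * ∑ i, e i) := by
        simp only [Finset.sum_add_distrib, ← Finset.mul_sum, Finset.sum_const, Finset.card_univ,
          nsmul_eq_mul]
        ring
    _ ≤ Cg * ∑ i, e i + 1 * (2 * Cf * ∑ i, e i) := by gcongr; exact inv_mul_le_one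
    _ = (Cg + 2 * Cf) * (∑ i, |y i - y' i| + ∑ i, disorderGap k (w i) (w' i)) := by
        rw [← Finset.sum_add_distrib]; ring

end MeanField

theorem exp_sub_one_le_mul_exp (x : ℝ) : exp x - 1 ≤ x * exp x := by
  have h := mul_le_mul_of_nonneg_right (one_sub_le_exp_neg x) (exp_pos x).le
  rw [← exp_add, neg_add_cancel, exp_zero] at h
  linarith

theorem gronwallBound_mul_le (δ K x : ℝ) {A : ℝ} (hA : 0 ≤ A) :
    gronwallBound δ K (K * A) x ≤ exp (K * x) * (δ + K * x * A) := by
  rcases eq_or_ne K 0 with rfl | hK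
  · simp [gronwallBound_K0]
  · rw [gronwallBound_of_K_ne_0 hK, mul_div_cancel_left₀ _ hK]
    nlinarith [exp_sub_one_le_mul_exp (K * x)]

theorem add_integral_le_exp_mul {φ : ℝ → ℝ} {S A C t : ℝ} (hφ : Continuous φ) (hA : 0 ≤ A)
    (ht : 0 ≤ t) (hbound : ∀ s ∈ Ico 0 t, φ s ≤ C * ((S + ∫ r in 0..s, φ r) + A)) :
    S + ∫ r in 0..t, φ r ≤ exp (C * t) * (S + C * t * A) := by
  have hderiv : ∀ s, HasDerivAt (fun v => S + ∫ r in 0..v, φ r) (φ s) s :=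
    fun s => (hφ.integral_hasStrictDerivAt 0 s).hasDerivAt.const_add S
  have := le_gronwallBound_of_liminf_deriv_right_le (δ := S) (K := C) (ε := C * A)
    (continuous_iff_continuousAt.2 fun s => (hderiv s).continuousAt).continuousOn
    (fun s _ r hr => (hderiv s).hasDerivWithinAt.liminf_right_slope_le hr) (by simp)
    (fun s hs => (hbound s hs).trans_eq (mul_add _ _ _)) t ⟨ht, le_rfl⟩
  simpa using this.trans (gronwallBound_mul_le S C (t - 0) hA)

theorem abs_le_of_eq_add_integral {u h : ℝ → ℝ} {a s t : ℝ} (hu : u s = a + ∫ r in 0..s, h r)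
    (hs : 0 ≤ s) (hst : s ≤ t) (hh : IntervalIntegrable h volume 0 t) :
    |u s| ≤ |a| + ∫ r in 0..t, |h r| := by
  rw [hu]
  refine (abs_add_le _ _).trans (add_le_add_right ?_ _)
  exact (intervalIntegral.abs_integral_le_integral_abs hs).trans
    (intervalIntegral.integral_mono_interval le_rfl hs hst
      (Filter.Eventually.of_forall fun r => abs_nonneg _) hh.abs)

theorem iSup_abs_le_of_eq_add_integral {u h : ℝ → ℝ} {a t : ℝ}
    (hu : ∀ s, 0 ≤ s → u s = a + ∫ r in 0..s, h r) (ht : 0 ≤ t)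
    (hh : IntervalIntegrable h volume 0 t) :
    ⨆ s : Icc (0 : ℝ) t, |u s| ≤ |a| + ∫ r in 0..t, |h r| :=
  have : Nonempty (Icc (0 : ℝ) t) := nonempty_Icc_subtype ht
  ciSup_le fun s => abs_le_of_eq_add_integral (hu s s.2.1) s.2.1 s.2.2 hh

theorem sum_iSup_abs_le_of_eq_add_integral {ι : Type*} [Fintype ι] {u Δ : ι → ℝ → ℝ}
    {a : ι → ℝ} {K A t : ℝ} (hΔ : ∀ i, Continuous (Δ i))
    (hu : ∀ i s, 0 ≤ s → u i s = a i + ∫ r in 0..s, Δ i r) (hK : 0 ≤ K) (hA : 0 ≤ A)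
    (hbound : ∀ s, 0 ≤ s → ∑ i, |Δ i s| ≤ K * (∑ i, |u i s| + A)) (ht : 0 ≤ t) :
    ∑ i, ⨆ s : Icc (0 : ℝ) t, |u i s| ≤ exp (K * t) * (∑ i, |a i| + K * t * A) := by
  have hsum_int : ∀ s, ∑ i, (|a i| + ∫ r in 0..s, |Δ i r|)
      = ∑ i, |a i| + ∫ r in 0..s, ∑ i, |Δ i r| := fun s => by
    rw [intervalIntegral.integral_finsetSum fun i _ => (hΔ i).abs.intervalIntegrable 0 s,
      Finset.sum_add_distrib]
  have hsum : ∀ s, 0 ≤ s → ∑ i, |u i s| ≤ ∑ i, |a i| + ∫ r in 0..s, ∑ i, |Δ i r| :=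
    fun s hs => (Finset.sum_le_sum fun i _ => abs_le_of_eq_add_integral (hu i s hs) hs le_rfl
      ((hΔ i).intervalIntegrable 0 s)).trans_eq (hsum_int s)
  calc ∑ i, ⨆ s : Icc (0 : ℝ) t, |u i s|
      ≤ ∑ i, |a i| + ∫ r in 0..t, ∑ i, |Δ i r| :=
        (Finset.sum_le_sum fun i _ => iSup_abs_le_of_eq_add_integral (hu i) ht
          ((hΔ i).intervalIntegrable 0 t)).trans_eq (hsum_int t)
    _ ≤ exp (K * t) * (∑ i, |a i| + K * t * A) :=
        add_integral_le_exp_mul (continuous_finsetSum _ fun i _ => (hΔ i).abs) hA ht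
          fun s hs => (hbound s hs.1).trans <| by gcongr; exact hsum s hs.1

theorem stmt8_general (Cf Cg k2 : ℝ) (hCf : 0 ≤ Cf) (hCg : 0 ≤ Cg) :
    ∃ C : ℝ, 0 < C ∧
      ∀ (N : ℕ), 0 < N →
      ∀ (f' : ℝ → ℝ → ℝ → ℝ) (g : ℝ → ℝ → ℝ),
      (∀ a b u v u' v', |f' a u v - f' b u' v'| ≤ Cf * (|a - b| + |u - u'| + |v - v'|)) →
      (∀ a u v, |f' a u v| ≤ Cf) →
      (∀ x u v, |g x u - g x v| ≤ Cg * |u - v| * (1 + |u| ^ k2 + |v| ^ k2)) →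
      (∀ x y u, |g x u - g y u| ≤ Cg * |x - y|) →
      ∀ (M : ℝ) (ω ξ ξM : Fin N → ℝ) (B x xt : Fin N → ℝ → ℝ),
      (∀ i, Continuous (x i)) → (∀ i, Continuous (xt i)) →
      (∀ i t, 0 ≤ t → x i t = ξ i
          + (∫ s in (0:ℝ)..t, (g (x i s) (ω i)
              - (N : ℝ)⁻¹ * ∑ j, f' (x i s - x j s) (ω i) (ω j)))
          + B i t) →
      (∀ i t, 0 ≤ t → xt i t = ξM i
          + (∫ s in (0:ℝ)..t, (g (xt i s) (chiM M (ω i))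
              - (N : ℝ)⁻¹ * ∑ j, f' (xt i s - xt j s) (chiM M (ω i)) (chiM M (ω j))))
          + B i t) →
      ∀ t : ℝ, 0 ≤ t →
        (N : ℝ)⁻¹ * ∑ i, (⨆ s : Set.Icc (0:ℝ) t, |x i (s : ℝ) - xt i (s : ℝ)|)
          ≤ Real.exp (C * t) *
            ((C * t / N) * ∑ i, |ω i - chiM M (ω i)|
                * (1 + |ω i| ^ k2 + |chiM M (ω i)| ^ k2)
              + (N : ℝ)⁻¹ * ∑ i, |ξ i - ξM i|) := by
  refine ⟨Cg + 2 * Cf + 1, by positivity, ?_⟩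
  intro N _ f' g hf _ hgw hgx M ω ξ ξM B x xt hxc hxtc hx hxt t ht
  set C := Cg + 2 * Cf + 1
  set ωM : Fin N → ℝ := fun i => chiM M (ω i)
  have hgc : ∀ u, Continuous (g · u) := fun u =>
    (LipschitzWith.of_dist_le' fun a b => hgx a b u).continuous
  have hfc : ∀ u v, Continuous (f' · u v) := fun u v =>
    (LipschitzWith.of_dist_le' fun a b => by simpa [Real.dist_eq] using hf a b u v u v).continuous
  have hX := continuous_meanFieldDrift hgc hfc ω hxc
  have hXt := continuous_meanFieldDrift hgc hfc ωM hxtc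
  have hgap : ∀ i s, 0 ≤ s → x i s - xt i s = (ξ i - ξM i) + ∫ r in 0..s,
      (meanFieldDrift g f' ω (fun j => x j r) i - meanFieldDrift g f' ωM (fun j => xt j r) i) := by
    intro i s hs
    rw [intervalIntegral.integral_sub ((hX i).intervalIntegrable 0 s)
      ((hXt i).intervalIntegrable 0 s), hx i s hs, hxt i s hs]
    simp only [meanFieldDrift, Fintype.card_fin, ωM]
    ring
  set A := ∑ i, disorderGap k2 (ω i) (ωM i)
  have hA : 0 ≤ A := Finset.sum_nonneg fun i _ => disorderGap_nonneg _ _ _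
  have hdrift : ∀ s : ℝ, 0 ≤ s → ∑ i, |meanFieldDrift g f' ω (fun j => x j s) i
      - meanFieldDrift g f' ωM (fun j => xt j s) i| ≤ C * (∑ i, |x i s - xt i s| + A) :=
    fun s _ => (sum_abs_meanFieldDrift_sub_le hCf hf
      (fun x u v => (hgw x u v).trans_eq (mul_assoc _ _ _)) hgx _ _ _ _).trans <|
        mul_le_mul_of_nonneg_right (by linarith)
          (add_nonneg (Finset.sum_nonneg fun i _ => abs_nonneg _) hA)
  calc (N : ℝ)⁻¹ * ∑ i, (⨆ s : Icc (0:ℝ) t, |x i s - xt i s|)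
      ≤ (N : ℝ)⁻¹ * (exp (C * t) * (∑ i, |ξ i - ξM i| + C * t * A)) := by
        gcongr
        exact sum_iSup_abs_le_of_eq_add_integral (fun i => (hX i).sub (hXt i)) hgap
          (by positivity) hA hdrift ht
    _ = _ := by simp only [A, disorderGap, ωM]; ring

/-- Coupling estimate for the interacting particle system: if `x` and `x̃` solve the
`N`-particle mean-field SDEs driven by the same Brownian paths `B`, with disorders
`ω_i` and `χ_M(ω_i)` and initial conditions `ξ_i` and `ξ_{i,M}` respectively, then there
is a constant `C` depending only on `C_f, C_g` such that, pathwise, for all `t ≥ 0`,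
`(1/N) Σ_i sup_{s≤t} |x_{i,s} − x̃_{i,s}|`
` ≤ e^{Ct} ( (Ct/N) Σ_i |ω_i − χ_M(ω_i)|(1+|ω_i|^{k₂}+|χ_M(ω_i)|^{k₂}) + (1/N) Σ_i |ξ_i − ξ_{i,M}| )`. -/
theorem stmt8 (Cf Cg k2 : ℝ) (hCf : 0 ≤ Cf) (hCg : 0 ≤ Cg) (hk2 : 0 ≤ k2) :
    ∃ C : ℝ, 0 < C ∧
      ∀ (N : ℕ), 0 < N →
      ∀ (f' : ℝ → ℝ → ℝ → ℝ) (g : ℝ → ℝ → ℝ),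
      (∀ a b u v u' v', |f' a u v - f' b u' v'| ≤ Cf * (|a - b| + |u - u'| + |v - v'|)) →
      (∀ a u v, |f' a u v| ≤ Cf) →
      (∀ x u v, |g x u - g x v| ≤ Cg * |u - v| * (1 + |u| ^ k2 + |v| ^ k2)) →
      (∀ x y u, |g x u - g y u| ≤ Cg * |x - y|) →
      ∀ (M : ℝ) (ω ξ ξM : Fin N → ℝ) (B x xt : Fin N → ℝ → ℝ),
      (∀ i, Continuous (x i)) → (∀ i, Continuous (xt i)) →
      (∀ i t, 0 ≤ t → x i t = ξ i
          + (∫ s in (0:ℝ)..t, (g (x i s) (ω i)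
              - (N : ℝ)⁻¹ * ∑ j, f' (x i s - x j s) (ω i) (ω j)))
          + B i t) →
      (∀ i t, 0 ≤ t → xt i t = ξM i
          + (∫ s in (0:ℝ)..t, (g (xt i s) (chiM M (ω i))
              - (N : ℝ)⁻¹ * ∑ j, f' (xt i s - xt j s) (chiM M (ω i)) (chiM M (ω j))))
          + B i t) →
      ∀ t : ℝ, 0 ≤ t →
        (N : ℝ)⁻¹ * ∑ i, (⨆ s : Set.Icc (0:ℝ) t, |x i (s : ℝ) - xt i (s : ℝ)|)
          ≤ Real.exp (C * t) *
            ((C * t / N) * ∑ i, |ω i - chiM M (ω i)|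
                * (1 + |ω i| ^ k2 + |chiM M (ω i)| ^ k2)
              + (N : ℝ)⁻¹ * ∑ i, |ξ i - ξM i|) :=
  stmt8_general Cf Cg k2 hCf hCg
end

section
/- Truncated empirical disorder convergence: let μ be a probability measure on ℝ with ∫ |ω|^ι μ(dω) < ∞ for some ι ≥ k₂ + 1, and let (ω_i) be a sequence with (1/N) Σ δ_{ω_i} → μ weakly and (1/N) Σ |ω_i|^ι → ∫ |ω|^ι dμ. Then for every δ > 0 there exists M₀ such that for all M ≥ M₀, limsup_{N→∞} (1/N) Σ_{i=1}^N |ω_i − χ_M(ω_i)| (1 + |ω_i|^{k₂} + |χ_M(ω_i)|^{k₂}) < δ. -/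
open MeasureTheory Filter

lemma chiM_eq_self {M x : ℝ} (h : |x| ≤ M) : chiM M x = x := by
  rw [abs_le] at h
  unfold chiM
  rw [min_eq_left h.2, max_eq_left h.1]

lemma abs_chiM_eq {M x : ℝ} (hM : 0 ≤ M) (h : M < |x|) : |chiM M x| = M := by
  unfold chiM
  rcases lt_abs.mp h with h1 | h1
  · rw [min_eq_right h1.le, max_eq_left (by linarith), abs_of_nonneg hM]
  · rw [min_eq_left (by linarith), max_eq_right (by linarith), abs_of_nonpos (by linarith),
      neg_neg]

lemma key_bound {k2 ι m M x : ℝ} (hk2 : 0 ≤ k2) (hι : k2 + 1 ≤ ι) (hm : 1 ≤ m)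
    (hM : 2 * m ≤ M) :
    |x - chiM M x| * (1 + |x| ^ k2 + |chiM M x| ^ k2)
      ≤ 6 * (|x| ^ ι - min (|x| ^ ι) (m ^ ι)) := by
  have hι0 : (1 : ℝ) ≤ ι := by linarith
  rcases le_or_gt |x| M with h | h
  · rw [chiM_eq_self h, sub_self, abs_zero, zero_mul]
    have : min (|x| ^ ι) (m ^ ι) ≤ |x| ^ ι := min_le_left _ _
    linarith
  · have hM0 : (0:ℝ) ≤ M := by linarith
    have hx1 : (1:ℝ) ≤ |x| := by linarith
    have hxpos : (0:ℝ) < |x| := by linarith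
    have hchi : |chiM M x| = M := abs_chiM_eq hM0 h
    -- |x - chiM M x| ≤ |x|
    have h1 : |x - chiM M x| ≤ |x| := by
      have := abs_sub_abs_le_abs_sub x (chiM M x)
      rcases lt_abs.mp h with h1 | h1
      · unfold chiM
        rw [min_eq_right h1.le, max_eq_left (by linarith), abs_of_nonneg (by linarith),
          abs_of_pos (by linarith : 0 < x)]
        linarith
      · unfold chiM
        rw [min_eq_left (by linarith), max_eq_right (by linarith),
          abs_of_nonpos (by linarith : x - -M ≤ 0), abs_of_neg (by linarith : x < 0)]
        linarith
    -- M^k2 ≤ |x|^k2, 1 ≤ |x|^k2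
    have h2 : M ^ k2 ≤ |x| ^ k2 := Real.rpow_le_rpow hM0 h.le hk2
    have h3 : (1:ℝ) ≤ |x| ^ k2 := Real.one_le_rpow hx1 hk2
    have h4 : (0:ℝ) ≤ |x| ^ k2 := by linarith
    -- LHS ≤ 3 |x|^{k2+1}
    have h5 : |x| * |x| ^ k2 = |x| ^ (k2 + 1) := by
      rw [Real.rpow_add hxpos, Real.rpow_one]; ring
    have h6 : |x| ^ (k2 + 1) ≤ |x| ^ ι := Real.rpow_le_rpow_of_exponent_le hx1 hι
    have h7 : |x - chiM M x| * (1 + |x| ^ k2 + |chiM M x| ^ k2) ≤ 3 * |x| ^ ι := by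
      rw [hchi]
      have habs : (0:ℝ) ≤ |x - chiM M x| := abs_nonneg _
      have hMk : (0:ℝ) ≤ M ^ k2 := Real.rpow_nonneg hM0 k2
      calc |x - chiM M x| * (1 + |x| ^ k2 + M ^ k2)
          ≤ |x| * (3 * |x| ^ k2) := by
            apply mul_le_mul h1 (by linarith) (by linarith) (abs_nonneg x)
        _ = 3 * (|x| * |x| ^ k2) := by ring
        _ ≤ 3 * |x| ^ ι := by rw [h5]; linarith
    -- m^ι ≤ |x|^ι / 2
    have h8 : m ^ ι ≤ (|x| / 2) ^ ι :=
      Real.rpow_le_rpow (by linarith) (by linarith) (by linarith)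
    have h9 : (|x| / 2) ^ ι = |x| ^ ι / 2 ^ ι := Real.div_rpow (abs_nonneg x) (by norm_num) ι
    have h10 : (2:ℝ) ≤ 2 ^ ι := by
      calc (2:ℝ) = 2 ^ (1:ℝ) := (Real.rpow_one 2).symm
        _ ≤ 2 ^ ι := Real.rpow_le_rpow_of_exponent_le one_le_two hι0
    have h11 : |x| ^ ι / 2 ^ ι ≤ |x| ^ ι / 2 := by
      apply div_le_div_of_nonneg_left (Real.rpow_nonneg (abs_nonneg x) ι) two_pos h10
    have h12 : min (|x| ^ ι) (m ^ ι) ≤ |x| ^ ι / 2 := le_trans (min_le_right _ _) (by linarith)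
    linarith

/-- Truncated empirical disorder convergence: under weak convergence of the empirical
measures to `μ` and convergence of the `ι`-th empirical moments (`ι ≥ k₂ + 1`),
the truncation error vanishes uniformly in `N` as the truncation level `M → ∞`. -/
theorem stmt11 (μ : Measure ℝ) [IsProbabilityMeasure μ]
    (k2 ι : ℝ) (hk2 : 0 ≤ k2) (hι : k2 + 1 ≤ ι)
    (hmom : Integrable (fun w => |w| ^ ι) μ)
    (ω : ℕ → ℝ)
    (hweak : ∀ g : BoundedContinuousFunction ℝ ℝ,
      Tendsto (fun N : ℕ => (N : ℝ)⁻¹ * ∑ i ∈ Finset.range N, g (ω i)) atTop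
        (nhds (∫ w, g w ∂μ)))
    (hmomconv : Tendsto (fun N : ℕ => (N : ℝ)⁻¹ * ∑ i ∈ Finset.range N, |ω i| ^ ι) atTop
      (nhds (∫ w, |w| ^ ι ∂μ))) :
    ∀ δ : ℝ, 0 < δ → ∃ M₀ : ℝ, ∀ M ≥ M₀,
      limsup (fun N : ℕ => (N : ℝ)⁻¹ * ∑ i ∈ Finset.range N,
        |ω i - chiM M (ω i)| * (1 + |ω i| ^ k2 + |chiM M (ω i)| ^ k2)) atTop < δ := by
  intro δ hδ
  have hι1 : (1:ℝ) ≤ ι := by linarith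
  -- tail integral tends to 0
  set T : ℕ → ℝ := fun n => ∫ w, (|w| ^ ι - min (|w| ^ ι) ((n : ℝ) ^ ι)) ∂μ with hT
  have habs_meas : AEStronglyMeasurable (fun w : ℝ => |w| ^ ι) μ := hmom.aestronglyMeasurable
  have hcont : ∀ c : ℝ, Continuous (fun w : ℝ => min (|w| ^ ι) c) :=
    fun c => ((Real.continuous_rpow_const (by linarith)).comp continuous_abs).min
      continuous_const
  have hTlim : Tendsto T atTop (nhds 0) := by
    have := MeasureTheory.tendsto_integral_of_dominated_convergence
      (μ := μ) (F := fun n w => |w| ^ ι - min (|w| ^ ι) ((n : ℝ) ^ ι)) (f := fun _ => (0:ℝ))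
      (bound := fun w => |w| ^ ι)
      (fun n => (habs_meas.sub ((hcont _).aestronglyMeasurable)))
      hmom
      (fun n => Filter.Eventually.of_forall (fun w => by
        have h0 : (0:ℝ) ≤ min (|w| ^ ι) ((n : ℝ) ^ ι) :=
          le_min (Real.rpow_nonneg (abs_nonneg w) ι) (Real.rpow_nonneg (Nat.cast_nonneg n) ι)
        have h1 : min (|w| ^ ι) ((n : ℝ) ^ ι) ≤ |w| ^ ι := min_le_left _ _
        show ‖|w| ^ ι - min (|w| ^ ι) ((n : ℝ) ^ ι)‖ ≤ |w| ^ ι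
        rw [Real.norm_eq_abs, abs_of_nonneg (by linarith)]
        linarith))
      (Filter.Eventually.of_forall (fun w => by
        have heq : (fun n : ℕ => |w| ^ ι - min (|w| ^ ι) ((n : ℝ) ^ ι))
            =ᶠ[atTop] fun _ => (0:ℝ) := by
          filter_upwards [eventually_ge_atTop ⌈|w|⌉₊] with n hn
          have h1 : |w| ≤ (n : ℝ) := le_trans (Nat.le_ceil _) (by exact_mod_cast hn)
          have : |w| ^ ι ≤ (n : ℝ) ^ ι := Real.rpow_le_rpow (abs_nonneg w) h1 (by linarith)
          rw [min_eq_left this, sub_self]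
        exact Tendsto.congr' heq.symm tendsto_const_nhds))
    simpa using this
  -- choose n with T n < δ / 6 and 1 ≤ n
  obtain ⟨n, hn1, hTn⟩ : ∃ n : ℕ, 1 ≤ n ∧ T n < δ / 6 := by
    have h1 := (hTlim.eventually (gt_mem_nhds (by linarith : (0:ℝ) < δ / 6))).and
      (eventually_ge_atTop 1)
    obtain ⟨n, hn⟩ := h1.exists
    exact ⟨n, hn.2, hn.1⟩
  -- bounded continuous truncated function
  set g : BoundedContinuousFunction ℝ ℝ :=
    BoundedContinuousFunction.ofNormedAddCommGroup
      (fun w => min (|w| ^ ι) ((n : ℝ) ^ ι)) (hcont _) ((n : ℝ) ^ ι)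
      (fun w => by
        have h0 : (0:ℝ) ≤ min (|w| ^ ι) ((n : ℝ) ^ ι) :=
          le_min (Real.rpow_nonneg (abs_nonneg w) ι) (Real.rpow_nonneg (Nat.cast_nonneg n) ι)
        rw [Real.norm_eq_abs, abs_of_nonneg h0]
        exact min_le_right _ _) with hg
  have hg_apply : ∀ w, g w = min (|w| ^ ι) ((n : ℝ) ^ ι) := fun w => rfl
  have hg_int : Integrable (fun w => min (|w| ^ ι) ((n : ℝ) ^ ι)) μ := g.integrable μ
  -- convergence of empirical tails
  set A : ℕ → ℝ := fun N => (N : ℝ)⁻¹ * ∑ i ∈ Finset.range N,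
      (|ω i| ^ ι - min (|ω i| ^ ι) ((n : ℝ) ^ ι)) with hA
  have hAlim : Tendsto A atTop (nhds (T n)) := by
    have h1 : Tendsto (fun N : ℕ => (N : ℝ)⁻¹ * ∑ i ∈ Finset.range N, |ω i| ^ ι
        - (N : ℝ)⁻¹ * ∑ i ∈ Finset.range N, g (ω i)) atTop
        (nhds (∫ w, |w| ^ ι ∂μ - ∫ w, g w ∂μ)) := hmomconv.sub (hweak g)
    have h2 : (∫ w, |w| ^ ι ∂μ - ∫ w, g w ∂μ) = T n := by
      have hTn' : T n = ∫ w, (|w| ^ ι - min (|w| ^ ι) ((n : ℝ) ^ ι)) ∂μ := rfl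
      rw [hTn', integral_sub hmom hg_int]
      rfl
    rw [h2] at h1
    refine h1.congr (fun N => ?_)
    rw [hA]
    simp only [hg_apply]
    rw [Finset.sum_sub_distrib, mul_sub]
  refine ⟨2 * n, fun M hM => ?_⟩
  -- pointwise comparison of the empirical sums
  have hcomp : ∀ N : ℕ, (N : ℝ)⁻¹ * ∑ i ∈ Finset.range N,
      |ω i - chiM M (ω i)| * (1 + |ω i| ^ k2 + |chiM M (ω i)| ^ k2) ≤ 6 * A N := by
    intro N
    calc (N : ℝ)⁻¹ * ∑ i ∈ Finset.range N,
        |ω i - chiM M (ω i)| * (1 + |ω i| ^ k2 + |chiM M (ω i)| ^ k2)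
        ≤ (N : ℝ)⁻¹ * ∑ i ∈ Finset.range N,
            6 * (|ω i| ^ ι - min (|ω i| ^ ι) ((n : ℝ) ^ ι)) := by
          apply mul_le_mul_of_nonneg_left _ (by positivity)
          apply Finset.sum_le_sum
          intro i _
          exact key_bound hk2 hι (by exact_mod_cast hn1) hM
      _ = 6 * A N := by rw [hA, ← Finset.mul_sum]; ring
  have hnonneg : ∀ N : ℕ, (0:ℝ) ≤ (N : ℝ)⁻¹ * ∑ i ∈ Finset.range N,
      |ω i - chiM M (ω i)| * (1 + |ω i| ^ k2 + |chiM M (ω i)| ^ k2) := by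
    intro N
    apply mul_nonneg (by positivity)
    apply Finset.sum_nonneg
    intro i _
    apply mul_nonneg (abs_nonneg _)
    have h1 : (0:ℝ) ≤ |ω i| ^ k2 := Real.rpow_nonneg (abs_nonneg _) _
    have h2 : (0:ℝ) ≤ |chiM M (ω i)| ^ k2 := Real.rpow_nonneg (abs_nonneg _) _
    linarith
  have h6A : Tendsto (fun N => 6 * A N) atTop (nhds (6 * T n)) := hAlim.const_mul 6
  calc limsup (fun N : ℕ => (N : ℝ)⁻¹ * ∑ i ∈ Finset.range N,
        |ω i - chiM M (ω i)| * (1 + |ω i| ^ k2 + |chiM M (ω i)| ^ k2)) atTop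
      ≤ limsup (fun N => 6 * A N) atTop :=
        limsup_le_limsup (Filter.Eventually.of_forall hcomp)
          (isCoboundedUnder_le_of_le atTop hnonneg) h6A.isBoundedUnder_le
    _ = 6 * T n := h6A.limsup_eq
    _ < δ := by linarith
end
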